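/- arXiv:1203.2677 — 2 statements merged into one kernel-verified Lean document; each statement's English description precedes it below -/
import Mathlib

section
/- Let A = (a_{ij}) be a 2N×2N skew-symmetric matrix over a field and y ∈ ℂ^{2N}. Then det(a_{ij} − y_i y_j) = det(a_{ij}). -/
/-!
By the matrix determinant lemma, `det (A - y yᵀ) = det A - yᵀ (adj A) y`. For a skew-symmetric `A`
of even size, `adj A` is again skew-symmetric, because `adj (-A) = (-1)^(2N-1) adj A`; so the
quadratic form `yᵀ (adj A) y` vanishes.
-/

open Matrix Polynomial

variable {n R S : Type*} [Fintype n]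

theorem Matrix.dotProduct_mulVec_self_eq_zero [CommRing R] [IsAddTorsionFree R]
    {A : Matrix n n R} (hA : Aᵀ = -A) (v : n → R) : v ⬝ᵥ A *ᵥ v = 0 := by
  refine self_eq_neg.mp ?_
  calc v ⬝ᵥ A *ᵥ v = Aᵀ *ᵥ v ⬝ᵥ v := by rw [dotProduct_mulVec, mulVec_transpose]
    _ = -(v ⬝ᵥ A *ᵥ v) := by rw [hA, neg_mulVec, neg_dotProduct, dotProduct_comm]

variable [DecidableEq n]

theorem RingHom.map_det_add_vecMulVec [CommRing R] [CommRing S] (f : R →+* S)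
    (M : Matrix n n R) (u v : n → R) :
    f (M + vecMulVec u v).det = (f.mapMatrix M + vecMulVec (f ∘ u) (f ∘ v)).det := by
  rw [f.map_det]
  congr 1
  ext i j
  simp [vecMulVec_apply]

theorem RingHom.map_dotProduct_adjugate_mulVec [CommRing R] [CommRing S] (f : R →+* S)
    (M : Matrix n n R) (u v : n → R) :
    f (v ⬝ᵥ M.adjugate *ᵥ u) = (f ∘ v) ⬝ᵥ (f.mapMatrix M).adjugate *ᵥ (f ∘ u) := by
  rw [f.map_dotProduct, ← f.map_adjugate]
  congr 1
  ext i
  exact f.map_mulVec _ _ i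

namespace Matrix

theorem det_add_vecMulVec_of_isUnit [CommRing R] {A : Matrix n n R} (hA : IsUnit A.det)
    (u v : n → R) : (A + vecMulVec u v).det = A.det + v ⬝ᵥ A.adjugate *ᵥ u := by
  have hfactor : A + vecMulVec u v = A * (1 + vecMulVec (A⁻¹ *ᵥ u) v) := by
    rw [Matrix.mul_add, Matrix.mul_one, mul_vecMulVec, mulVec_mulVec, mul_nonsing_inv _ hA,
      one_mulVec]
  rw [hfactor, det_mul, vecMulVec_eq Unit, det_one_add_replicateCol_mul_replicateRow, mul_add,
    mul_one, ← smul_eq_mul, ← dotProduct_smul, det_smul_inv_mulVec_eq_cramer _ _ hA,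
    cramer_eq_adjugate_mulVec]

/-- The matrix determinant lemma, without invertibility. The identity is transported from
`X • 1 + A`, whose determinant is monic and hence a unit in the fraction field of `R[X]`, down to
`A` by evaluating at `X = 0`. -/
theorem det_add_vecMulVec [CommRing R] [IsDomain R] (A : Matrix n n R) (u v : n → R) :
    (A + vecMulVec u v).det = A.det + v ⬝ᵥ A.adjugate *ᵥ u := by
  let B : Matrix n n R[X] := (X : R[X]) • 1 + A.map C
  let ι := algebraMap R[X] (FractionRing R[X])
  have hB : IsUnit (ι.mapMatrix B).det := by
    rw [← ι.map_det, isUnit_iff_ne_zero, (IsFractionRing.injective R[X] _).ne_iff' (map_zero ι)]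
    exact Monic.ne_zero (leadingCoeff_det_X_one_add_C A)
  have hBK := det_add_vecMulVec_of_isUnit hB (ι ∘ C ∘ u) (ι ∘ C ∘ v)
  rw [← ι.map_det_add_vecMulVec, ← ι.map_det, ← ι.map_dotProduct_adjugate_mulVec, ← map_add,
    (IsFractionRing.injective R[X] _).eq_iff] at hBK
  let φ := evalRingHom (0 : R)
  have hB0 : φ.mapMatrix B = A := by ext i j; simp [B, φ]
  have hA := congrArg φ hBK
  rw [φ.map_det_add_vecMulVec, map_add φ, φ.map_det, φ.map_dotProduct_adjugate_mulVec, hB0] at hA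
  simpa [φ, Function.comp_def] using hA

theorem adjugate_transpose_eq_neg [CommRing R] {A : Matrix n n R} (hA : Aᵀ = -A)
    (hn : Even (Fintype.card n)) : A.adjugateᵀ = -A.adjugate := by
  rcases isEmpty_or_nonempty n with _ | _
  · exact Subsingleton.elim _ _
  have hodd : Odd (Fintype.card n - 1) := Nat.Even.sub_odd Fintype.card_pos hn odd_one
  rw [adjugate_transpose, hA, ← neg_one_smul R A, adjugate_smul, hodd.neg_one_pow, neg_one_smul]

end Matrix

theorem stmt_6_general (N : ℕ) (A : Matrix (Fin (2 * N)) (Fin (2 * N)) ℂ)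
    (hskew : ∀ i j, A j i = -A i j)
    (y : Fin (2 * N) → ℂ) :
    (Matrix.of fun i j => A i j - y i * y j).det = A.det := by
  have hA : Aᵀ = -A := by
    ext i j
    exact hskew i j
  have hadj : A.adjugateᵀ = -A.adjugate :=
    adjugate_transpose_eq_neg hA (by simp)
  have hrank_one : (Matrix.of fun i j => A i j - y i * y j) = A + vecMulVec (-y) y := by
    ext i j
    simp [vecMulVec_apply, sub_eq_add_neg]
  rw [hrank_one, det_add_vecMulVec, mulVec_neg, dotProduct_neg,
    dotProduct_mulVec_self_eq_zero hadj, neg_zero, add_zero]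

theorem stmt_6 (N : ℕ) (A : Matrix (Fin (2 * N)) (Fin (2 * N)) ℂ)
    (hskew : ∀ i j, A j i = -A i j) (hdiag : ∀ i, A i i = 0)
    (y : Fin (2 * N) → ℂ) :
    (Matrix.of fun i j => A i j - y i * y j).det = A.det :=
  stmt_6_general N A hskew y
end

section
/- Let f, g : ℝ² → ℝ be smooth positive functions with variables (x₁, x₋₁). If −(½ D_{x₁}D_{x₋₁} − 1) f·f = f g (i.e., −(f_{x₁x₋₁} f − f_{x₁} f_{x₋₁}) + f² = f g), then setting ρ = f/g and u = −(log f)_{x₁x₁}, the relation u_{x₋₁} = (1/ρ)_{x₁} holds. -/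
/-- Partial derivative with respect to the first variable. -/
noncomputable def pd1 (f : ℝ → ℝ → ℝ) : ℝ → ℝ → ℝ :=
  fun x y => deriv (fun x' => f x' y) x

/-- Partial derivative with respect to the second variable. -/
noncomputable def pd2 (f : ℝ → ℝ → ℝ) : ℝ → ℝ → ℝ :=
  fun x y => deriv (fun y' => f x y') y

section helpers

variable {h : ℝ → ℝ → ℝ}

lemma diff1 (hh : ContDiff ℝ (⊤ : ℕ∞) (fun p : ℝ × ℝ => h p.1 p.2)) (y : ℝ) :
    Differentiable ℝ (fun x' => h x' y) :=
  (hh.comp (contDiff_id.prodMk contDiff_const)).differentiable (by simp)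

lemma diff2 (hh : ContDiff ℝ (⊤ : ℕ∞) (fun p : ℝ × ℝ => h p.1 p.2)) (x : ℝ) :
    Differentiable ℝ (fun y' => h x y') :=
  (hh.comp (contDiff_const.prodMk contDiff_id)).differentiable (by simp)

lemma hasDerivAt_pd1 (hh : ContDiff ℝ (⊤ : ℕ∞) (fun p : ℝ × ℝ => h p.1 p.2)) (x y : ℝ) :
    HasDerivAt (fun x' => h x' y) (pd1 h x y) x :=
  ((diff1 hh y) x).hasDerivAt

lemma hasDerivAt_pd2 (hh : ContDiff ℝ (⊤ : ℕ∞) (fun p : ℝ × ℝ => h p.1 p.2)) (x y : ℝ) :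
    HasDerivAt (fun y' => h x y') (pd2 h x y) y :=
  ((diff2 hh x) y).hasDerivAt

lemma pd1_eq_fderiv (hh : ContDiff ℝ (⊤ : ℕ∞) (fun p : ℝ × ℝ => h p.1 p.2)) (x y : ℝ) :
    pd1 h x y = fderiv ℝ (fun p : ℝ × ℝ => h p.1 p.2) (x, y) (1, 0) := by
  have h1 : HasFDerivAt (fun x' : ℝ => (x', y))
      ((ContinuousLinearMap.id ℝ ℝ).prod 0) x :=
    (hasFDerivAt_id x).prodMk (hasFDerivAt_const y x)
  have h2 := (((hh.differentiable (by simp)) (x, y)).hasFDerivAt).comp x h1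
  have h3 := h2.hasDerivAt
  simp only [ContinuousLinearMap.coe_comp', Function.comp_apply,
    ContinuousLinearMap.prod_apply, ContinuousLinearMap.coe_id', id_eq,
    ContinuousLinearMap.zero_apply] at h3
  exact h3.deriv.symm ▸ rfl

lemma pd2_eq_fderiv (hh : ContDiff ℝ (⊤ : ℕ∞) (fun p : ℝ × ℝ => h p.1 p.2)) (x y : ℝ) :
    pd2 h x y = fderiv ℝ (fun p : ℝ × ℝ => h p.1 p.2) (x, y) (0, 1) := by
  have h1 : HasFDerivAt (fun y' : ℝ => (x, y'))
      ((0 : ℝ →L[ℝ] ℝ).prod (ContinuousLinearMap.id ℝ ℝ)) y :=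
    (hasFDerivAt_const x y).prodMk (hasFDerivAt_id y)
  have h2 := (((hh.differentiable (by simp)) (x, y)).hasFDerivAt).comp y h1
  have h3 := h2.hasDerivAt
  simp only [ContinuousLinearMap.coe_comp', Function.comp_apply,
    ContinuousLinearMap.prod_apply, ContinuousLinearMap.coe_id', id_eq,
    ContinuousLinearMap.zero_apply] at h3
  exact h3.deriv.symm ▸ rfl

lemma contDiff_pd1 (hh : ContDiff ℝ (⊤ : ℕ∞) (fun p : ℝ × ℝ => h p.1 p.2)) :
    ContDiff ℝ (⊤ : ℕ∞) (fun p : ℝ × ℝ => pd1 h p.1 p.2) := by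
  have he : (fun p : ℝ × ℝ => pd1 h p.1 p.2)
      = fun p => fderiv ℝ (fun q : ℝ × ℝ => h q.1 q.2) p (1, 0) :=
    funext fun p => pd1_eq_fderiv hh p.1 p.2
  rw [he]
  exact (hh.fderiv_right (by simp)).clm_apply contDiff_const

lemma contDiff_pd2 (hh : ContDiff ℝ (⊤ : ℕ∞) (fun p : ℝ × ℝ => h p.1 p.2)) :
    ContDiff ℝ (⊤ : ℕ∞) (fun p : ℝ × ℝ => pd2 h p.1 p.2) := by
  have he : (fun p : ℝ × ℝ => pd2 h p.1 p.2)
      = fun p => fderiv ℝ (fun q : ℝ × ℝ => h q.1 q.2) p (0, 1) :=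
    funext fun p => pd2_eq_fderiv hh p.1 p.2
  rw [he]
  exact (hh.fderiv_right (by simp)).clm_apply contDiff_const

/-- Clairaut: mixed partials commute for smooth functions. -/
lemma pd_comm (hh : ContDiff ℝ (⊤ : ℕ∞) (fun p : ℝ × ℝ => h p.1 p.2)) (x y : ℝ) :
    pd1 (pd2 h) x y = pd2 (pd1 h) x y := by
  set H := fun p : ℝ × ℝ => h p.1 p.2 with hH
  have hdH : Differentiable ℝ (fderiv ℝ H) :=
    (hh.fderiv_right (m := (⊤ : ℕ∞)) (by simp)).differentiable (by simp)
  have hsymm : IsSymmSndFDerivAt ℝ H (x, y) :=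
    hh.contDiffAt.isSymmSndFDerivAt (by rw [minSmoothness_of_isRCLikeNormedField]; show ((2 : ℕ∞) : WithTop ℕ∞) ≤ ((⊤ : ℕ∞) : WithTop ℕ∞); exact WithTop.coe_le_coe.mpr le_top)
  have key : ∀ v w : ℝ × ℝ,
      fderiv ℝ (fun p => fderiv ℝ H p v) (x, y) w = fderiv ℝ (fderiv ℝ H) (x, y) w v := by
    intro v w
    rw [fderiv_clm_apply (hdH (x, y)) (differentiableAt_const v)]
    simp
  -- left side
  have e2 : (fun p : ℝ × ℝ => pd2 h p.1 p.2) = fun p => fderiv ℝ H p (0, 1) :=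
    funext fun p => pd2_eq_fderiv hh p.1 p.2
  have e1 : (fun p : ℝ × ℝ => pd1 h p.1 p.2) = fun p => fderiv ℝ H p (1, 0) :=
    funext fun p => pd1_eq_fderiv hh p.1 p.2
  have l1 : pd1 (pd2 h) x y
      = fderiv ℝ (fun p : ℝ × ℝ => pd2 h p.1 p.2) (x, y) (1, 0) :=
    pd1_eq_fderiv (contDiff_pd2 hh) x y
  have l2 : pd2 (pd1 h) x y
      = fderiv ℝ (fun p : ℝ × ℝ => pd1 h p.1 p.2) (x, y) (0, 1) :=
    pd2_eq_fderiv (contDiff_pd1 hh) x y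
  rw [l1, l2, e1, e2, key, key]
  exact hsymm (1, 0) (0, 1)

end helpers

/-- from the first bilinear equation, u_{x₋₁} = (1/ρ)_{x₁}. -/
theorem stmt_7 (f g : ℝ → ℝ → ℝ)
    (hf : ContDiff ℝ (⊤ : ℕ∞) (fun p : ℝ × ℝ => f p.1 p.2))
    (hg : ContDiff ℝ (⊤ : ℕ∞) (fun p : ℝ × ℝ => g p.1 p.2))
    (hfpos : ∀ x y, 0 < f x y) (hgpos : ∀ x y, 0 < g x y)
    (hbil : ∀ x y,
      -(pd2 (pd1 f) x y * f x y - pd1 f x y * pd2 f x y) + (f x y) ^ 2 =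
        f x y * g x y) :
    ∀ x y,
      pd2 (fun a b => -(pd1 (pd1 fun a' b' => Real.log (f a' b')) a b)) x y =
        pd1 (fun a b => 1 / (f a b / g a b)) x y := by
  set L : ℝ → ℝ → ℝ := fun a b => Real.log (f a b) with hL
  have hfne : ∀ x y, f x y ≠ 0 := fun x y => (hfpos x y).ne'
  have hLc : ContDiff ℝ (⊤ : ℕ∞) (fun p : ℝ × ℝ => L p.1 p.2) :=
    hf.log fun p => hfne p.1 p.2
  -- pd1 L = f₁ / f
  have hpd1L : ∀ a b, pd1 L a b = pd1 f a b / f a b := by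
    intro a b
    have := ((hasDerivAt_pd1 hf a b).log (hfne a b))
    exact this.deriv
  have hpd1fc : ContDiff ℝ (⊤ : ℕ∞) (fun p : ℝ × ℝ => pd1 f p.1 p.2) := contDiff_pd1 hf
  have hpd1Lc : ContDiff ℝ (⊤ : ℕ∞) (fun p : ℝ × ℝ => pd1 L p.1 p.2) := contDiff_pd1 hLc
  -- pd2 (pd1 L) = (f₁₂ f − f₁ f₂)/f²
  have hpd2pd1L : ∀ a b, pd2 (pd1 L) a b
      = (pd2 (pd1 f) a b * f a b - pd1 f a b * pd2 f a b) / (f a b) ^ 2 := by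
    intro a b
    have hdiv : HasDerivAt (fun y' => pd1 f a y' / f a y')
        ((pd2 (pd1 f) a b * f a b - pd1 f a b * pd2 f a b) / (f a b) ^ 2) b :=
      (hasDerivAt_pd2 hpd1fc a b).div (hasDerivAt_pd2 hf a b) (hfne a b)
    have he : (fun y' => pd1 L a y') = fun y' => pd1 f a y' / f a y' :=
      funext fun y' => hpd1L a y'
    show deriv (fun y' => pd1 L a y') b = _
    rw [he]
    exact hdiv.deriv
  -- relate to g/f via the bilinear equation
  have hkey : ∀ a b, (1 : ℝ) / (f a b / g a b) = 1 - pd2 (pd1 L) a b := by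
    intro a b
    rw [hpd2pd1L a b, one_div_div]
    have hb := hbil a b
    have h2 : pd2 (pd1 f) a b * f a b - pd1 f a b * pd2 f a b
        = f a b ^ 2 - f a b * g a b := by linarith
    rw [h2]
    have hne : f a b ≠ 0 := hfne a b
    field_simp
    ring
  intro x y
  -- RHS
  have hR : (fun a b => 1 / (f a b / g a b)) = fun a b => 1 - pd2 (pd1 L) a b :=
    funext fun a => funext fun b => hkey a b
  have hpd2pd1Lc : ContDiff ℝ (⊤ : ℕ∞) (fun p : ℝ × ℝ => pd2 (pd1 L) p.1 p.2) :=
    contDiff_pd2 hpd1Lc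
  have hRHS : pd1 (fun a b => 1 / (f a b / g a b)) x y = -(pd1 (pd2 (pd1 L)) x y) := by
    rw [hR]
    show deriv (fun x' => 1 - pd2 (pd1 L) x' y) x = -(deriv (fun x' => pd2 (pd1 L) x' y) x)
    rw [deriv_const_sub]
  -- LHS
  have hLHS : pd2 (fun a b => -(pd1 (pd1 L) a b)) x y = -(pd2 (pd1 (pd1 L)) x y) := by
    show deriv (fun y' => -(pd1 (pd1 L) x y')) y = -(deriv (fun y' => pd1 (pd1 L) x y') y)
    rw [deriv.fun_neg]
  rw [hLHS, hRHS, pd_comm hpd1Lc x y]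
end
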